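/- Let p and q be opposite projective points of a generalized quadrangle Γ. Then the map θ_{p,q} sending a point x of the perp-plane Γ_p (i.e., a point x collinear with p) to the block {q,x}^⊥ of Γ_q, and sending a block α of Γ_p to the unique point α^⊥⊥ ∩ q^⊥ of Γ_q, is a well-defined isomorphism from Γ_p to the dual of Γ_q. In particular, for a projective point p and a block α of Γ_p, and a point q opposite p, there is a unique point a collinear with q that is collinear with all points of α. -/

import Mathlib

/-- A (thick) generalized quadrangle. -/
structure GenQuadrangle where
  P : Type
  Ln : Type
  inc : P → Ln → Prop
  /-- (PL): no pair of distinct points is incident with a pair of distinct lines -/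
  pl : ∀ ⦃x y : P⦄ ⦃l m : Ln⦄, inc x l → inc y l → inc x m → inc y m → x = y ∨ l = m
  /-- thickness: every point is incident with at least three lines -/
  thickPt : ∀ x : P, ∃ l₁ l₂ l₃ : Ln, l₁ ≠ l₂ ∧ l₁ ≠ l₃ ∧ l₂ ≠ l₃ ∧
    inc x l₁ ∧ inc x l₂ ∧ inc x l₃
  /-- thickness: every line is incident with at least three points -/
  thickLn : ∀ l : Ln, ∃ x₁ x₂ x₃ : P, x₁ ≠ x₂ ∧ x₁ ≠ x₃ ∧ x₂ ≠ x₃ ∧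
    inc x₁ l ∧ inc x₂ l ∧ inc x₃ l
  /-- (GQ): for every non-incident point-line pair (x,l) there are a unique point y
  and a unique line m with x I m I y I l -/
  gq : ∀ (x : P) (l : Ln), ¬ inc x l → ∃! q : P × Ln, inc x q.2 ∧ inc q.1 q.2 ∧ inc q.1 l

namespace GenQuadrangle

variable (G : GenQuadrangle)

/-- Two points are collinear if some line is incident with both. -/
def collinear (x y : G.P) : Prop := ∃ l : G.Ln, G.inc x l ∧ G.inc y l

/-- Two points are opposite if they are not collinear. -/
def opp (x y : G.P) : Prop := ¬ G.collinear x y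

/-- The perp {x,y}^⊥ of a pair of points. -/
def perp (x y : G.P) : Set G.P := {z | G.collinear z x ∧ G.collinear z y}

/-- X^⊥ for a set of points X. -/
def perpSet (S : Set G.P) : Set G.P := {z | ∀ u ∈ S, G.collinear z u}

/-- The span {x,y}^⊥⊥ of a pair of points. -/
def span (x y : G.P) : Set G.P := G.perpSet (G.perp x y)

/-- A point x is regular if every span {x,y}^⊥⊥ (y opposite x) is a perp of a pair
of opposite points. -/
def regular (x : G.P) : Prop :=
  ∀ y : G.P, G.opp x y → ∃ u v : G.P, G.opp u v ∧ G.span x y = G.perp u v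

/-- A point x is projective if it is regular and every pair of distinct perps
through x meets in a unique point (i.e. the dual net Γ*_x is a dual affine plane). -/
def projective (x : G.P) : Prop :=
  G.regular x ∧ ∀ y z : G.P, G.opp x y → G.opp x z → G.perp x y ≠ G.perp x z →
    ∃! w : G.P, w ∈ G.perp x y ∧ w ∈ G.perp x z

/-- A triad: three pairwise opposite points. -/
def triad (x y z : G.P) : Prop := G.opp x y ∧ G.opp y z ∧ G.opp x z

/-- A center of a triad: a point collinear with all three. -/
def center (w x y z : G.P) : Prop := G.collinear w x ∧ G.collinear w y ∧ G.collinear w z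

end GenQuadrangle

/-! For a block `α = {p,y}^⊥` of `Γ_p` everything rests on two facts. A point collinear with two
distinct points of `α` is collinear with all of `α`, and a point `a ≠ p` of `α^⊥` satisfies
`{p,a}^⊥ = α`. When `α` is a line both come from the absence of triangles; when `α` is a trace they
come from projectivity of `p`, since two traces through `p` sharing two points coincide.

The pole of `α` with respect to `q` is a common neighbour of `q` and two points of `α`; such a
neighbour exists because `q` is projective. It is unique: if a point `w` opposite `p` were
collinear with two points `a ≠ b` of `α^⊥`, projecting `p` onto the lines `wa` and `wb` would give
two points of `α` collinear with `w`; then `w` and `a` would be distinct collinear points of `α^⊥`,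
whereas distinct points of `α^⊥` are opposite.
Since every block `α` of `Γ_p` equals `{p, pole α}^⊥`, the pole map is injective; existence and
uniqueness of poles for the blocks of `Γ_q` make `x ↦ {q,x}^⊥` bijective. -/

namespace GenQuadrangle

variable {G : GenQuadrangle} {p q x y w a b : G.P} {l : G.Ln}

theorem collinear_refl (x : G.P) : G.collinear x x := by
  obtain ⟨l, -, -, -, -, -, hl, -, -⟩ := G.thickPt x
  exact ⟨l, hl, hl⟩

theorem collinear.symm (h : G.collinear x y) : G.collinear y x :=
  let ⟨l, hx, hy⟩ := h
  ⟨l, hy, hx⟩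

theorem opp.symm (h : G.opp x y) : G.opp y x := fun h' => h h'.symm

theorem opp.ne (h : G.opp x y) : x ≠ y := by
  rintro rfl
  exact h (collinear_refl x)

theorem ne_of_collinear_of_opp (hx : G.collinear x p) (hq : G.opp q p) : x ≠ q := by
  rintro rfl
  exact hq hx

theorem exists_inc_collinear_of_not_inc (h : ¬ G.inc x l) :
    ∃ y, G.inc y l ∧ G.collinear x y := by
  obtain ⟨⟨y, m⟩, ⟨hxm, hym, hyl⟩, -⟩ := G.gq x l h
  exact ⟨y, hyl, m, hxm, hym⟩

theorem inc_of_collinear_of_collinear {z : G.P} (hxy : x ≠ y) (hx : G.inc x l) (hy : G.inc y l)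
    (hzx : G.collinear z x) (hzy : G.collinear z y) : G.inc z l := by
  by_contra hz
  obtain ⟨m, hzm, hxm⟩ := hzx
  obtain ⟨n, hzn, hyn⟩ := hzy
  obtain ⟨_, -, huniq⟩ := G.gq z l hz
  exact hxy (congrArg Prod.fst
    ((huniq (x, m) ⟨hzm, hxm, hx⟩).trans (huniq (y, n) ⟨hzn, hyn, hy⟩).symm))

theorem perp_eq_setOf_inc (hxy : x ≠ y) (hx : G.inc x l) (hy : G.inc y l) :
    G.perp x y = {z | G.inc z l} := by
  ext z
  exact ⟨fun ⟨hzx, hzy⟩ => inc_of_collinear_of_collinear hxy hx hy hzx hzy,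
    fun hz => ⟨⟨l, hz, hx⟩, ⟨l, hz, hy⟩⟩⟩

theorem mem_span_left : x ∈ G.span x y := fun _ hz => hz.1.symm

theorem mem_span_right : y ∈ G.span x y := fun _ hz => hz.2.symm

theorem inc_of_mem_span (hxy : x ≠ y) (hx : G.inc x l) (hy : G.inc y l)
    (ha : a ∈ G.span x y) : G.inc a l :=
  inc_of_collinear_of_collinear hxy hx hy (ha x ⟨collinear_refl x, l, hx, hy⟩)
    (ha y ⟨⟨l, hy, hx⟩, collinear_refl y⟩)

theorem exists_ne_mem_perp (hxy : x ≠ y) :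
    ∃ z₁ ∈ G.perp x y, ∃ z₂ ∈ G.perp x y, z₁ ≠ z₂ := by
  by_cases hc : G.collinear x y
  · exact ⟨x, ⟨collinear_refl x, hc⟩, y, ⟨hc.symm, collinear_refl y⟩, hxy⟩
  obtain ⟨l, m, -, hlm, -, -, hxl, hxm, -⟩ := G.thickPt x
  obtain ⟨z₁, hz₁, hyz₁⟩ := exists_inc_collinear_of_not_inc fun h : G.inc y l => hc ⟨l, hxl, h⟩
  obtain ⟨z₂, hz₂, hyz₂⟩ := exists_inc_collinear_of_not_inc fun h : G.inc y m => hc ⟨m, hxm, h⟩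
  refine ⟨z₁, ⟨⟨l, hz₁, hxl⟩, hyz₁.symm⟩, z₂, ⟨⟨m, hz₂, hxm⟩, hyz₂.symm⟩, ?_⟩
  rintro rfl
  rcases G.pl hz₁ hxl hz₂ hxm with rfl | rfl
  · exact hc hyz₁.symm
  · exact hlm rfl

theorem opp_of_mem_perp (hab : a ≠ b) (hxy : G.opp x y) (ha : a ∈ G.perp x y)
    (hb : b ∈ G.perp x y) : G.opp a b := by
  rintro ⟨l, hal, hbl⟩
  exact hxy ⟨l, inc_of_collinear_of_collinear hab hal hbl ha.1.symm hb.1.symm,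
    inc_of_collinear_of_collinear hab hal hbl ha.2.symm hb.2.symm⟩

theorem opp_of_mem_span (hab : a ≠ b) (hxy : G.opp x y) (ha : a ∈ G.span x y)
    (hb : b ∈ G.span x y) : G.opp a b := by
  obtain ⟨z₁, h₁, z₂, h₂, hz⟩ := exists_ne_mem_perp hxy.ne
  exact opp_of_mem_perp hab (opp_of_mem_perp hz hxy h₁ h₂) ⟨ha z₁ h₁, ha z₂ h₂⟩
    ⟨hb z₁ h₁, hb z₂ h₂⟩

theorem perp_eq_perp_of_projective {z₁ z₂ : G.P} (hp : G.projective p) (hy : G.opp p y) (hw : G.opp p w)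
    (hz : z₁ ≠ z₂) (h₁ : z₁ ∈ G.perp p w ∩ G.perp p y) (h₂ : z₂ ∈ G.perp p w ∩ G.perp p y) :
    G.perp p w = G.perp p y := by
  by_contra hne
  obtain ⟨_, -, huniq⟩ := hp.2 w y hw hy hne
  exact hz ((huniq z₁ h₁).trans (huniq z₂ h₂).symm)

theorem mem_span_of_collinear_of_collinear {z₁ z₂ : G.P} (hp : G.projective p) (hy : y ≠ p)
    (hz : z₁ ≠ z₂) (h₁ : z₁ ∈ G.perp p y) (h₂ : z₂ ∈ G.perp p y)
    (hw₁ : G.collinear w z₁) (hw₂ : G.collinear w z₂) : w ∈ G.span p y := by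
  by_cases hpy : G.collinear p y
  · obtain ⟨l, hpl, hyl⟩ := hpy
    have hrow := perp_eq_setOf_inc hy.symm hpl hyl
    rw [hrow] at h₁ h₂
    intro u hu
    rw [hrow] at hu
    exact ⟨l, inc_of_collinear_of_collinear hz h₁ h₂ hw₁ hw₂, hu⟩
  by_cases hpw : G.collinear p w
  · obtain rfl : w = p := by
      by_contra hwp
      exact opp_of_mem_perp hwp (opp_of_mem_perp hz hpy h₁ h₂) ⟨hw₁, hw₂⟩
        ⟨h₁.1.symm, h₂.1.symm⟩ hpw.symm
    exact mem_span_left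
  · rw [span, ← perp_eq_perp_of_projective hp hpy hpw hz ⟨⟨h₁.1, hw₁.symm⟩, h₁⟩
      ⟨⟨h₂.1, hw₂.symm⟩, h₂⟩]
    exact mem_span_right

theorem perp_eq_of_mem_span (hp : G.projective p) (hy : y ≠ p) (ha : a ∈ G.span p y)
    (hap : a ≠ p) : G.perp p a = G.perp p y := by
  by_cases hpy : G.collinear p y
  · obtain ⟨l, hpl, hyl⟩ := hpy
    rw [perp_eq_setOf_inc hy.symm hpl hyl,
      perp_eq_setOf_inc hap.symm hpl (inc_of_mem_span hy.symm hpl hyl ha)]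
  obtain ⟨z₁, h₁, z₂, h₂, hz⟩ := exists_ne_mem_perp hy.symm
  exact perp_eq_perp_of_projective hp hpy (opp_of_mem_span hap.symm hpy mem_span_left ha) hz
    ⟨⟨h₁.1, (ha z₁ h₁).symm⟩, h₁⟩ ⟨⟨h₂.1, (ha z₂ h₂).symm⟩, h₂⟩

theorem eq_of_mem_span_of_collinear (hp : G.projective p) (hy : y ≠ p) (hw : G.opp p w)
    (ha : a ∈ G.span p y) (hb : b ∈ G.span p y) (hwa : G.collinear w a)
    (hwb : G.collinear w b) : a = b := by
  by_contra hab
  by_cases hpy : G.collinear p y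
  · obtain ⟨l, hpl, hyl⟩ := hpy
    have hwl := inc_of_collinear_of_collinear hab (inc_of_mem_span hy.symm hpl hyl ha)
      (inc_of_mem_span hy.symm hpl hyl hb) hwa hwb
    exact hw ⟨l, hpl, hwl⟩
  have hap : a ≠ p := ne_of_collinear_of_opp hwa.symm hw
  have hbp : b ≠ p := ne_of_collinear_of_opp hwb.symm hw
  have hab' : G.opp a b := opp_of_mem_span hab hpy ha hb
  obtain ⟨l, hwl, hal⟩ := hwa
  obtain ⟨m, hwm, hbm⟩ := hwb
  obtain ⟨c, hcl, hpc⟩ := exists_inc_collinear_of_not_inc fun h : G.inc p l =>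
    opp_of_mem_span hap.symm hpy mem_span_left ha ⟨l, h, hal⟩
  obtain ⟨d, hdm, hpd⟩ := exists_inc_collinear_of_not_inc fun h : G.inc p m =>
    opp_of_mem_span hbp.symm hpy mem_span_left hb ⟨m, h, hbm⟩
  have hcd : c ≠ d := by
    rintro rfl
    rcases G.pl hcl hwl hdm hwm with rfl | rfl
    · exact hw hpc
    · exact hab' ⟨l, hal, hbm⟩
  have hc : c ∈ G.perp p y := perp_eq_of_mem_span hp hy ha hap ▸ ⟨hpc.symm, l, hcl, hal⟩
  have hd : d ∈ G.perp p y := perp_eq_of_mem_span hp hy hb hbp ▸ ⟨hpd.symm, m, hdm, hbm⟩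
  have hwy : w ∈ G.span p y :=
    mem_span_of_collinear_of_collinear hp hy hcd hc hd ⟨l, hwl, hcl⟩ ⟨m, hwm, hdm⟩
  have hwa : w ≠ a := by
    rintro rfl
    exact hab' ⟨m, hwm, hbm⟩
  exact opp_of_mem_span hwa hpy hwy ha ⟨l, hwl, hal⟩

theorem exists_center_of_collinear (hx : G.collinear q x) (y : G.P) :
    ∃ w, G.center w q x y := by
  obtain ⟨l, hql, hxl⟩ := hx
  by_cases hyl : G.inc y l
  · exact ⟨y, ⟨l, hyl, hql⟩, ⟨l, hyl, hxl⟩, collinear_refl y⟩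
  obtain ⟨w, hwl, hyw⟩ := exists_inc_collinear_of_not_inc hyl
  exact ⟨w, ⟨l, hwl, hql⟩, ⟨l, hwl, hxl⟩, hyw.symm⟩

theorem exists_center_of_projective (hq : G.projective q) (x y : G.P) :
    ∃ w, G.center w q x y := by
  by_cases hx : G.collinear q x
  · exact exists_center_of_collinear hx y
  by_cases hy : G.collinear q y
  · obtain ⟨w, hwq, hwy, hwx⟩ := exists_center_of_collinear hy x
    exact ⟨w, hwq, hwx, hwy⟩
  by_cases hxy : G.perp q x = G.perp q y
  · obtain ⟨w, hw, -⟩ := exists_ne_mem_perp (opp.ne hx)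
    exact ⟨w, hw.1, hw.2, (hxy ▸ hw).2⟩
  · obtain ⟨w, ⟨hwx, hwy⟩, -⟩ := hq.2 x y hx hy hxy
    exact ⟨w, hwx.1, hwx.2, hwy.2⟩

theorem existsUnique_collinear_mem_span (hpq : G.opp p q) (hp : G.projective p)
    (hq : G.projective q) (hy : y ≠ p) : ∃! a, G.collinear a q ∧ a ∈ G.span p y := by
  obtain ⟨z₁, h₁, z₂, h₂, hz⟩ := exists_ne_mem_perp hy.symm
  obtain ⟨a, haq, ha₁, ha₂⟩ := exists_center_of_projective hq z₁ z₂
  have ha : a ∈ G.span p y := mem_span_of_collinear_of_collinear hp hy hz h₁ h₂ ha₁ ha₂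
  exact ⟨a, ⟨haq, ha⟩, fun b ⟨hbq, hb⟩ =>
    eq_of_mem_span_of_collinear hp hy hpq hb ha hbq.symm haq.symm⟩

theorem perp_injOn_of_projective (hp : G.projective p) (hpq : G.opp p q) :
    Set.InjOn (G.perp p) {x | G.collinear x q} := by
  intro x hx x' hx' h
  have hx'p : x' ∈ G.span p x := by
    rw [span, h]
    exact mem_span_right
  exact eq_of_mem_span_of_collinear hp (ne_of_collinear_of_opp hx hpq) hpq mem_span_right hx'p
    hx.symm hx'.symm

end GenQuadrangle

open GenQuadrangle

/-- Let p and q be opposite projective points of a generalized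
quadrangle Γ. Then θ_{p,q}, sending a point x of the perp-plane Γ_p to the block
{q,x}^⊥ of Γ_q and a block α of Γ_p to the unique point in α^⊥⊥ ∩ q^⊥, is a
well-defined isomorphism from Γ_p to the dual of Γ_q. In particular, for every
block α of Γ_p there is a unique point a collinear with q and collinear with all
points of α. -/
theorem theta_pq_isomorphism
    (G : GenQuadrangle) (p q : G.P) (hopp : G.opp p q)
    (hp : G.projective p) (hq : G.projective q) :
    -- well-definedness / "in particular" : each block of Γ_p has a unique
    -- "pole" collinear with q
    (∀ α : Set G.P, (∃ y : G.P, y ≠ p ∧ α = G.perp p y) →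
      ∃! a : G.P, G.collinear a q ∧ ∀ z ∈ α, G.collinear a z) ∧
    -- θ_{p,q} is an isomorphism from Γ_p onto the dual of Γ_q
    (∃ (f : {x : G.P // G.collinear x p} →
            {α : Set G.P // ∃ y : G.P, y ≠ q ∧ α = G.perp q y})
       (g : {α : Set G.P // ∃ y : G.P, y ≠ p ∧ α = G.perp p y} →
            {a : G.P // G.collinear a q}),
      Function.Bijective f ∧ Function.Bijective g ∧
      (∀ x, (f x).1 = G.perp q x.1) ∧
      (∀ α, ∀ z ∈ α.1, G.collinear (g α).1 z) ∧
      (∀ x α, x.1 ∈ α.1 ↔ (g α).1 ∈ (f x).1)) := by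
  have pole : ∀ α : Set G.P, (∃ y : G.P, y ≠ p ∧ α = G.perp p y) →
      ∃! a : G.P, G.collinear a q ∧ ∀ z ∈ α, G.collinear a z := by
    rintro α ⟨y, hy, rfl⟩
    exact existsUnique_collinear_mem_span hopp hp hq hy
  choose g hg using fun α : {α : Set G.P // ∃ y : G.P, y ≠ p ∧ α = G.perp p y} =>
    (pole α.1 α.2).exists
  have perp_g : ∀ α, G.perp p (g α) = α.1 := by
    rintro ⟨_, y, hy, rfl⟩
    exact perp_eq_of_mem_span hp hy (hg ⟨_, y, hy, rfl⟩).2 (ne_of_collinear_of_opp (hg _).1 hopp)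
  refine ⟨pole, fun x => ⟨G.perp q x, x, ne_of_collinear_of_opp x.2 hopp.symm, rfl⟩,
    fun α => ⟨g α, (hg α).1⟩, ⟨?_, ?_⟩, ⟨?_, ?_⟩, fun _ => rfl, fun α => (hg α).2, ?_⟩
  · rintro ⟨x, hx⟩ ⟨x', hx'⟩ h
    exact Subtype.ext (perp_injOn_of_projective hq hopp.symm hx hx' (congrArg Subtype.val h))
  · rintro ⟨_, y, hy, rfl⟩
    obtain ⟨b, ⟨hbp, hb⟩, -⟩ := existsUnique_collinear_mem_span hopp.symm hq hp hy
    exact ⟨⟨b, hbp⟩,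
      Subtype.ext (perp_eq_of_mem_span hq hy hb (ne_of_collinear_of_opp hbp hopp.symm))⟩
  · intro α α' h
    apply Subtype.ext
    calc α.1 = G.perp p (g α) := (perp_g α).symm
      _ = G.perp p (g α') := congrArg (fun a => G.perp p a.1) h
      _ = α'.1 := perp_g α'
  · rintro ⟨a, ha⟩
    have hap := ne_of_collinear_of_opp ha hopp
    exact ⟨⟨G.perp p a, a, hap, rfl⟩,
      Subtype.ext ((pole _ ⟨a, hap, rfl⟩).unique (hg _) ⟨ha, mem_span_right⟩)⟩
  · intro x α
    refine ⟨fun hx => ⟨(hg α).1, (hg α).2 x hx⟩, fun h => ?_⟩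
    rw [← perp_g α]
    exact ⟨x.2, h.2.symm⟩
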